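/- For the von Mises density f_vM(x; μ, κ) = C_q(κ) exp(κ x^T μ), extended to ℝ^{q+1}\{0} by f(x) = f(x/‖x‖), the operator Ψ(f,x) = -x^T ∇f(x) + q^{-1}(∇²f(x) - x^T H f(x) x) evaluated at x ∈ Ω_q equals κ C_q(κ) e^{κ x^T μ} ( -x^T μ + κ q^{-1}(1 - (x^T μ)^2) ). -/

import Mathlib

open MeasureTheory Real Set

noncomputable def besselI (ν z : ℝ) : ℝ :=
  (z / 2) ^ ν / (Real.sqrt π * Real.Gamma (ν + 1 / 2)) *
    ∫ t in Ioo (-1 : ℝ) 1, (1 - t ^ 2) ^ (ν - 1 / 2) * Real.exp (z * t)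

noncomputable def Cq (q : ℕ) (κ : ℝ) : ℝ :=
  κ ^ (((q : ℝ) - 1) / 2) / ((2 * π) ^ (((q : ℝ) + 1) / 2) * besselI (((q : ℝ) - 1) / 2) κ)

/-- The operator `Ψ(f,x) = -xᵀ∇f(x) + q⁻¹(∇²f(x) - xᵀ Hf(x) x)`, where the Laplacian and
the Hessian quadratic form are expressed through the second iterated Fréchet derivative. -/
noncomputable def PsiOp (q : ℕ) (f : EuclideanSpace ℝ (Fin (q + 1)) → ℝ)
    (x : EuclideanSpace ℝ (Fin (q + 1))) : ℝ :=
  -inner ℝ x (gradient f x) + (q : ℝ)⁻¹ *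
    ((∑ i : Fin (q + 1),
        iteratedFDeriv ℝ 2 f x ![EuclideanSpace.single i (1 : ℝ), EuclideanSpace.single i (1 : ℝ)])
      - iteratedFDeriv ℝ 2 f x ![x, x])

/-- The radial extension of the von Mises density `f_vM(·;μ,κ)` to `ℝ^{q+1} \ {0}`. -/
noncomputable def vonMisesExt (q : ℕ) (μ : EuclideanSpace ℝ (Fin (q + 1))) (κ : ℝ)
    (y : EuclideanSpace ℝ (Fin (q + 1))) : ℝ :=
  Cq q κ * Real.exp (κ * inner ℝ (‖y‖⁻¹ • y) μ)

/-! The extension `F y = c · exp (κ ⟪y / ‖y‖, μ⟫)` is constant along rays, so `⟪x, ∇F x⟫ = 0` and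
`D²F x (x, x) = 0`, and only the Laplacian survives in `Ψ`. At a unit vector `x`, with
`t = ⟪x, μ⟫`, the first derivative of `s y = ⟪y / ‖y‖, μ⟫` is `⟪μ - t x, ·⟫`, and the chain rule gives
`D²F x = c κ e^{κ t} (κ ⟪μ - t x, ·⟫ ⊗ ⟪μ - t x, ·⟫ + D²s x)`. Tracing over an orthonormal basis of
`ℝ^{q+1}` gives `‖μ - t x‖² = 1 - t²` from the first term and `-q t` from the second. -/

open scoped RealInnerProductSpace

section

variable {𝕜 : Type*} [NontriviallyNormedField 𝕜] {E F : Type*} [NormedAddCommGroup E]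
  [NormedSpace 𝕜 E] [NormedAddCommGroup F] [NormedSpace 𝕜 F]

theorem ContDiffAt.iteratedFDeriv_two_apply_eq_fderiv_fderiv_apply {f : E → F} {x : E}
    (hf : ContDiffAt 𝕜 2 f x) (v w : E) :
    iteratedFDeriv 𝕜 2 f x ![v, w] = fderiv 𝕜 (fun y => fderiv 𝕜 f y w) x v := by
  have hdiff : DifferentiableAt 𝕜 (fderiv 𝕜 f) x :=
    (hf.fderiv_right (m := 1) le_rfl).differentiableAt one_ne_zero
  rw [iteratedFDeriv_two_apply, fderiv_clm_apply hdiff (differentiableAt_const w)]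
  simp

end

noncomputable section

variable {E : Type*} [NormedAddCommGroup E] [InnerProductSpace ℝ E]

theorem hasFDerivAt_norm_of_ne_zero {y : E} (hy : y ≠ 0) :
    HasFDerivAt (fun z : E => ‖z‖) (‖y‖⁻¹ • innerSL ℝ y) y := by
  have hn : ‖y‖ ≠ 0 := norm_ne_zero_iff.mpr hy
  convert (hasStrictFDerivAt_norm_sq y).hasFDerivAt.sqrt (pow_ne_zero 2 hn) using 1
  · simp [Real.sqrt_sq (norm_nonneg _)]
  · ext v
    simp [Real.sqrt_sq (norm_nonneg _)]
    field_simp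

theorem hasFDerivAt_norm_inv {y : E} (hy : y ≠ 0) :
    HasFDerivAt (fun z : E => ‖z‖⁻¹) (-(‖y‖⁻¹ ^ 3) • innerSL ℝ y) y := by
  have hn : ‖y‖ ≠ 0 := norm_ne_zero_iff.mpr hy
  refine ((hasDerivAt_inv hn).comp_hasFDerivAt y (hasFDerivAt_norm_of_ne_zero hy)).congr_fderiv ?_
  ext v
  simp
  field_simp

def unitInner (μ y : E) : ℝ := ⟪‖y‖⁻¹ • y, μ⟫

def unitInnerDeriv (μ y : E) : StrongDual ℝ E :=
  ‖y‖⁻¹ • innerSL ℝ μ - (‖y‖⁻¹ ^ 3 * ⟪y, μ⟫) • innerSL ℝ y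

/-- At a unit vector `x`, `⟪unitInnerHess μ x w, v⟫` is the second derivative of `unitInner μ`
at `x` in the directions `v` and `w`. -/
def unitInnerHess (μ x w : E) : E :=
  (3 * ⟪x, μ⟫ * ⟪x, w⟫ - ⟪μ, w⟫) • x - ⟪x, w⟫ • μ - ⟪x, μ⟫ • w

def radialVonMises (c κ : ℝ) (μ y : E) : ℝ := c * exp (κ * unitInner μ y)

theorem unitInner_of_norm_eq_one (μ : E) {x : E} (hx : ‖x‖ = 1) : unitInner μ x = ⟪x, μ⟫ := by
  simp [unitInner, hx]

theorem unitInnerDeriv_apply (μ y w : E) :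
    unitInnerDeriv μ y w = ‖y‖⁻¹ * ⟪μ, w⟫ - ‖y‖⁻¹ ^ 3 * ⟪y, μ⟫ * ⟪y, w⟫ := by
  simp [unitInnerDeriv, mul_assoc]

theorem unitInnerDeriv_apply_self (μ y : E) : unitInnerDeriv μ y y = 0 := by
  rcases eq_or_ne y 0 with rfl | hy
  · simp [unitInnerDeriv_apply]
  · have hn : ‖y‖ ≠ 0 := norm_ne_zero_iff.mpr hy
    rw [unitInnerDeriv_apply, real_inner_self_eq_norm_sq, real_inner_comm]
    field_simp
    ring

theorem unitInnerDeriv_of_norm_eq_one (μ : E) {x : E} (hx : ‖x‖ = 1) :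
    unitInnerDeriv μ x = innerSL ℝ (μ - ⟪x, μ⟫ • x) := by
  ext w
  simp [unitInnerDeriv_apply, hx]

theorem hasFDerivAt_unitInner (μ : E) {y : E} (hy : y ≠ 0) :
    HasFDerivAt (unitInner μ) (unitInnerDeriv μ y) y := by
  have hs : unitInner μ = fun z => ‖z‖⁻¹ * ⟪z, μ⟫ := by
    funext z
    simp [unitInner, real_inner_smul_left]
  rw [hs]
  refine ((hasFDerivAt_norm_inv hy).mul
    ((hasFDerivAt_id y).inner ℝ (hasFDerivAt_const μ y))).congr_fderiv ?_
  ext w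
  simp [unitInnerDeriv_apply, real_inner_comm]
  ring

theorem hasFDerivAt_unitInnerDeriv_apply (μ w : E) {x : E} (hx : ‖x‖ = 1) :
    HasFDerivAt (fun y => unitInnerDeriv μ y w) (innerSL ℝ (unitInnerHess μ x w)) x := by
  have hn := hasFDerivAt_norm_inv (norm_ne_zero_iff.mp (by simp [hx]) : x ≠ 0)
  simp only [unitInnerDeriv_apply]
  refine ((hn.mul_const ⟪μ, w⟫).sub (((hn.pow 3).mul
    ((hasFDerivAt_id x).inner ℝ (hasFDerivAt_const μ x))).mul
    ((hasFDerivAt_id x).inner ℝ (hasFDerivAt_const w x)))).congr_fderiv ?_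
  ext v
  simp [unitInnerHess, hx, real_inner_comm]
  ring

theorem hasFDerivAt_radialVonMises (c κ : ℝ) (μ : E) {y : E} (hy : y ≠ 0) :
    HasFDerivAt (radialVonMises c κ μ)
      ((c * κ * exp (κ * unitInner μ y)) • unitInnerDeriv μ y) y := by
  refine ((((hasFDerivAt_unitInner μ hy).const_mul κ).exp).const_mul c).congr_fderiv ?_
  ext w
  simp only [smul_apply, smul_eq_mul]
  ring

theorem contDiffAt_radialVonMises {n : WithTop ℕ∞} (c κ : ℝ) (μ : E) {y : E} (hy : y ≠ 0) :
    ContDiffAt ℝ n (radialVonMises c κ μ) y :=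
  contDiffAt_const.mul ((contDiffAt_const.mul
    ((((contDiffAt_norm ℝ hy).inv (norm_ne_zero_iff.mpr hy)).smul contDiffAt_id).inner ℝ
      contDiffAt_const)).exp)

theorem inner_gradient_radialVonMises_self [CompleteSpace E] (c κ : ℝ) (μ : E) {y : E}
    (hy : y ≠ 0) : ⟪y, gradient (radialVonMises c κ μ) y⟫ = 0 := by
  rw [real_inner_comm, gradient, InnerProductSpace.toDual_symm_apply,
    (hasFDerivAt_radialVonMises c κ μ hy).fderiv, smul_apply, unitInnerDeriv_apply_self,
    smul_zero]

theorem iteratedFDeriv_two_radialVonMises (c κ : ℝ) (μ : E) {x : E} (hx : ‖x‖ = 1) (v w : E) :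
    iteratedFDeriv ℝ 2 (radialVonMises c κ μ) x ![v, w] =
      c * κ * exp (κ * ⟪x, μ⟫) *
        (κ * ⟪μ - ⟪x, μ⟫ • x, v⟫ * ⟪μ - ⟪x, μ⟫ • x, w⟫ + ⟪unitInnerHess μ x w, v⟫) := by
  have hx0 : x ≠ 0 := norm_ne_zero_iff.mp (by simp [hx])
  have hfderiv : (fun y => fderiv ℝ (radialVonMises c κ μ) y w) =ᶠ[nhds x]
      fun y => c * κ * exp (κ * unitInner μ y) * unitInnerDeriv μ y w := by
    filter_upwards [isOpen_ne.mem_nhds hx0] with y hy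
    rw [(hasFDerivAt_radialVonMises c κ μ hy).fderiv, smul_apply, smul_eq_mul]
  have hderiv := ((((hasFDerivAt_unitInner μ hx0).const_mul κ).exp).const_mul (c * κ)).fun_mul
    (hasFDerivAt_unitInnerDeriv_apply μ w hx)
  rw [(contDiffAt_radialVonMises c κ μ hx0).iteratedFDeriv_two_apply_eq_fderiv_fderiv_apply,
    hfderiv.fderiv_eq, hderiv.fderiv]
  simp [unitInner_of_norm_eq_one μ hx, unitInnerDeriv_of_norm_eq_one μ hx, inner_sub_left,
    inner_smul_left]
  ring

theorem iteratedFDeriv_two_radialVonMises_self (c κ : ℝ) (μ : E) {x : E} (hx : ‖x‖ = 1) :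
    iteratedFDeriv ℝ 2 (radialVonMises c κ μ) x ![x, x] = 0 := by
  have hxx : ⟪x, x⟫ = 1 := by simp [hx]
  rw [iteratedFDeriv_two_radialVonMises c κ μ hx]
  simp only [unitInnerHess, inner_sub_left, inner_smul_left, real_inner_comm x μ, hxx,
    RCLike.conj_to_real]
  ring

theorem sum_iteratedFDeriv_two_radialVonMises {ι : Type*} [Fintype ι]
    (b : OrthonormalBasis ι ℝ E) (c κ : ℝ) {μ x : E} (hμ : ‖μ‖ = 1) (hx : ‖x‖ = 1) :
    ∑ i, iteratedFDeriv ℝ 2 (radialVonMises c κ μ) x ![b i, b i] =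
      c * κ * exp (κ * ⟪x, μ⟫) *
        (κ * (1 - ⟪x, μ⟫ ^ 2) - ((Fintype.card ι : ℝ) - 1) * ⟪x, μ⟫) := by
  have hxx : ⟪x, x⟫ = 1 := by simp [hx]
  have hμμ : ⟪μ, μ⟫ = 1 := by simp [hμ]
  have htangent : ⟪μ - ⟪x, μ⟫ • x, μ - ⟪x, μ⟫ • x⟫ = 1 - ⟪x, μ⟫ ^ 2 := by
    simp only [inner_sub_left, inner_sub_right, inner_smul_left, inner_smul_right, hxx, hμμ,
      real_inner_comm x μ, RCLike.conj_to_real]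
    ring
  have hterm : ∀ i, κ * ⟪μ - ⟪x, μ⟫ • x, b i⟫ * ⟪μ - ⟪x, μ⟫ • x, b i⟫
      + ⟪unitInnerHess μ x (b i), b i⟫ =
      κ * (⟪μ - ⟪x, μ⟫ • x, b i⟫ * ⟪b i, μ - ⟪x, μ⟫ • x⟫) + 3 * ⟪x, μ⟫ * (⟪x, b i⟫ * ⟪b i, x⟫)
        - 2 * (⟪μ, b i⟫ * ⟪b i, x⟫) - ⟪x, μ⟫ := by
    intro i
    have hb : ⟪b i, b i⟫ = 1 := by simp
    rw [real_inner_comm (μ - ⟪x, μ⟫ • x), real_inner_comm x (b i)]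
    simp only [unitInnerHess, inner_sub_left, inner_smul_left, hb, RCLike.conj_to_real]
    ring
  simp_rw [iteratedFDeriv_two_radialVonMises c κ μ hx, ← Finset.mul_sum, hterm,
    Finset.sum_sub_distrib, Finset.sum_add_distrib, ← Finset.mul_sum, b.sum_inner_mul_inner,
    htangent, hxx, real_inner_comm x μ, Finset.sum_const, Finset.card_univ, nsmul_eq_mul]
  ring

end

theorem PsiOp_vonMises_general (q : ℕ) (hq : 1 ≤ q) (κ : ℝ)
    (μ x : EuclideanSpace ℝ (Fin (q + 1)))
    (hμ : μ ∈ Metric.sphere (0 : EuclideanSpace ℝ (Fin (q + 1))) 1)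
    (hx : x ∈ Metric.sphere (0 : EuclideanSpace ℝ (Fin (q + 1))) 1) :
    PsiOp q (vonMisesExt q μ κ) x
      = κ * Cq q κ * Real.exp (κ * inner ℝ x μ) *
        (-(inner ℝ x μ : ℝ) + κ * (q : ℝ)⁻¹ * (1 - (inner ℝ x μ : ℝ) ^ 2)) := by
  have hμ1 : ‖μ‖ = 1 := by simpa using hμ
  have hx1 : ‖x‖ = 1 := by simpa using hx
  have hq0 : (q : ℝ) ≠ 0 := by positivity
  have hlaplacian := sum_iteratedFDeriv_two_radialVonMises
    (EuclideanSpace.basisFun (Fin (q + 1)) ℝ) (Cq q κ) κ hμ1 hx1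
  simp only [EuclideanSpace.basisFun_apply, Fintype.card_fin] at hlaplacian
  have hF : vonMisesExt q μ κ = radialVonMises (Cq q κ) κ μ := rfl
  rw [PsiOp, hF, inner_gradient_radialVonMises_self _ _ _ (norm_ne_zero_iff.mp (by simp [hx1])),
    hlaplacian, iteratedFDeriv_two_radialVonMises_self _ _ _ hx1]
  field_simp
  push_cast
  ring

/-- For the radially extended von Mises density, the operator `Ψ` evaluated at `x ∈ Ω_q`
equals `κ C_q(κ) e^{κ xᵀμ} ( -xᵀμ + κ q⁻¹ (1 - (xᵀμ)²) )`. -/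
theorem PsiOp_vonMises (q : ℕ) (hq : 1 ≤ q) (κ : ℝ) (hκ : 0 < κ)
    (μ x : EuclideanSpace ℝ (Fin (q + 1)))
    (hμ : μ ∈ Metric.sphere (0 : EuclideanSpace ℝ (Fin (q + 1))) 1)
    (hx : x ∈ Metric.sphere (0 : EuclideanSpace ℝ (Fin (q + 1))) 1) :
    PsiOp q (vonMisesExt q μ κ) x
      = κ * Cq q κ * Real.exp (κ * inner ℝ x μ) *
        (-(inner ℝ x μ : ℝ) + κ * (q : ℝ)⁻¹ * (1 - (inner ℝ x μ : ℝ) ^ 2)) :=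
  PsiOp_vonMises_general q hq κ μ x hμ hx
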